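/- arXiv:0911.5615 — 7 statements merged into one kernel-verified Lean document; each statement's English description precedes it below -/
import Mathlib

section
/- For every integer k ≥ 2 and every n ≥ 0, the number of equivalence classes of the k-recoil equivalence ≡_k on the symmetric group S_n equals n! if n ≤ k, and equals k!·k^(n−k) if n ≥ k. -/
/-!
The class of `σ` is determined by its code: for each value `v`, the number of values of the
window `(v - k, v)` that `σ` places before `v`. Conversely the code recovers the relative order
inside every window, by induction on the top value `v`: once the order of the values below `v` in
its window is known, the number of them placed before `v` fixes where `v` sits among them. The
codes that occur are exactly the sequences with `d v < min (v + 1) k`, all realised by inserting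
the values in increasing order, so there are `∏_{v < n} min (v + 1) k` classes.
-/

/-- The `k`-recoil equivalence `≡_k` on `Equiv.Perm (Fin n)`.
Values are 0-indexed: `a : Fin n` represents the value `a+1` of the paper.
`σ ≡_k τ` iff for all values `a < b` with `b - a < k`,
`σ⁻¹(a) < σ⁻¹(b) ↔ τ⁻¹(a) < τ⁻¹(b)`. -/
def recoilEquiv (k n : ℕ) (σ τ : Equiv.Perm (Fin n)) : Prop :=
  ∀ a b : Fin n, (a : ℕ) < b → (b : ℕ) - a < k →
    (σ.symm a < σ.symm b ↔ τ.symm a < τ.symm b)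

/-- The inversion set of a permutation: pairs of values `a < b` that appear
in the order `… b … a …` in the one-line word of `σ`. -/
def invSet {n : ℕ} (σ : Equiv.Perm (Fin n)) : Set (Fin n × Fin n) :=
  {p | p.1 < p.2 ∧ σ.symm p.2 < σ.symm p.1}

/-- The extension `σ̃ : ℤ → ℤ` of `σ ∈ S_n` (1-indexed) fixing all `i ∉ [1, n]`. -/
def extPerm {n : ℕ} (σ : Equiv.Perm (Fin n)) : ℤ → ℤ := fun i =>
  if h : 0 < i ∧ i ≤ (n : ℤ) then ((σ ⟨(i - 1).toNat, by omega⟩ : Fin n) : ℤ) + 1 else i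

/-- The `k`-descent code: `DC k σ ℓ` is `d_{ℓ+1}` of the paper, the rank of
`σ̃(ℓ+1)` among the `k` entries `σ̃(ℓ+1-k+1), …, σ̃(ℓ+1)` (positions 1-indexed). -/
noncomputable def DC (k : ℕ) {n : ℕ} (σ : Equiv.Perm (Fin n)) : Fin n → ℕ := fun ℓ =>
  ((Finset.Icc ((ℓ : ℤ) + 1 - k + 1) ((ℓ : ℤ) + 1)).filter
    (fun j => extPerm σ j ≤ extPerm σ ((ℓ : ℤ) + 1))).card

/-- `σ` is `k`-minimal: no index `i` with `σ(i) - σ(i+1) ≥ k`. -/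
def kMinimal (k : ℕ) {n : ℕ} (σ : Equiv.Perm (Fin n)) : Prop :=
  ¬ ∃ (i : ℕ) (h : i + 1 < n),
      (σ ⟨i + 1, h⟩ : ℕ) + k ≤ (σ ⟨i, Nat.lt_of_succ_lt h⟩ : ℕ)

/-- `σ` is `k`-maximal: no index `i` with `σ(i+1) - σ(i) ≥ k`. -/
def kMaximal (k : ℕ) {n : ℕ} (σ : Equiv.Perm (Fin n)) : Prop :=
  ¬ ∃ (i : ℕ) (h : i + 1 < n),
      (σ ⟨i, Nat.lt_of_succ_lt h⟩ : ℕ) + k ≤ (σ ⟨i + 1, h⟩ : ℕ)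

/-- Shifted concatenation `σ • τ` of two permutations. -/
def shiftConcat {m n : ℕ} (σ : Equiv.Perm (Fin m)) (τ : Equiv.Perm (Fin n)) :
    Equiv.Perm (Fin (m + n)) :=
  finSumFinEquiv.symm.trans ((Equiv.sumCongr σ τ).trans finSumFinEquiv)

/-- `π` is `•`-indecomposable: no proper prefix of positions maps onto
a prefix of values. -/
def indecomposable {n : ℕ} (π : Equiv.Perm (Fin n)) : Prop :=
  ¬ ∃ m : ℕ, 0 < m ∧ m < n ∧ ∀ i : Fin n, (i : ℕ) < m → (π i : ℕ) < m

/-- The setoid given by the `k`-recoil equivalence. -/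
def recoilSetoid (k n : ℕ) : Setoid (Equiv.Perm (Fin n)) where
  r := recoilEquiv k n
  iseqv := ⟨fun _ _ _ _ _ => Iff.rfl,
            fun h a b hab hbk => (h a b hab hbk).symm,
            fun h₁ h₂ a b hab hbk => (h₁ a b hab hbk).trans (h₂ a b hab hbk)⟩

open Finset Function

section RankComparison

variable {α β γ : Type*} [LinearOrder β] [LinearOrder γ]

theorem lt_iff_card_filter_le_card_filter_lt {f : α → β} (hf : Injective f) {s : Finset α}
    {a b : α} (ha : a ∈ s) (hab : a ≠ b) :
    f a < f b ↔ #{x ∈ s | f x ≤ f a} ≤ #{x ∈ s | f x < f b} := by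
  refine ⟨fun h => card_le_card fun x hx => ?_, fun h => ?_⟩
  · rw [mem_filter] at hx ⊢
    exact ⟨hx.1, hx.2.trans_lt h⟩
  · by_contra hab'
    have hba : f b < f a := lt_of_le_of_ne (not_lt.1 hab') (hf.ne hab.symm)
    have hssub : {x ∈ s | f x < f b} ⊂ {x ∈ s | f x ≤ f a} := by
      refine (ssubset_iff_of_subset fun x hx => ?_).2 ⟨a, by simp [ha], by simp [hba.not_gt]⟩
      rw [mem_filter] at hx ⊢
      exact ⟨hx.1, (hx.2.trans hba).le⟩
    exact (card_lt_card hssub).not_ge h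

theorem lt_iff_lt_swap {f : α → β} {g : α → γ} (hf : Injective f) (hg : Injective g) {x y : α}
    (hxy : x ≠ y) (h : f x < f y ↔ g x < g y) : f y < f x ↔ g y < g x := by
  rw [← not_iff_not, not_lt, not_lt, (hf.ne hxy).le_iff_lt, (hg.ne hxy).le_iff_lt, h]

/-- The number of elements of `s` below `b` fixes the comparison of `b` with each of them. -/
theorem lt_iff_lt_of_card_filter_lt_eq {f : α → β} {g : α → γ} (hf : Injective f)
    (hg : Injective g) {s : Finset α} {a b : α} (ha : a ∈ s) (hb : b ∉ s)
    (hs : ∀ x ∈ s, ∀ y ∈ s, x ≠ y → (f x < f y ↔ g x < g y))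
    (hcard : #{x ∈ s | f x < f b} = #{x ∈ s | g x < g b}) :
    f a < f b ↔ g a < g b := by
  have hab : a ≠ b := ne_of_mem_of_not_mem ha hb
  have hrank : {x ∈ s | f x ≤ f a} = {x ∈ s | g x ≤ g a} := filter_congr fun x hx => by
    rcases eq_or_ne x a with rfl | hxa
    · simp
    · rw [(hf.ne hxa).le_iff_lt, (hg.ne hxa).le_iff_lt, hs x hx a ha hxa]
  rw [lt_iff_card_filter_le_card_filter_lt hf ha hab,
    lt_iff_card_filter_le_card_filter_lt hg ha hab, hrank, hcard]

end RankComparison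

theorem exists_eq_of_le_of_forall_add_one_le {f : ℕ → ℕ} (h0 : f 0 = 0)
    (hf : ∀ t, f (t + 1) ≤ f t + 1) {N j : ℕ} (hj : j ≤ f N) : ∃ t ≤ N, f t = j := by
  induction N with
  | zero => exact ⟨0, le_rfl, by omega⟩
  | succ N ih =>
    rcases le_or_gt j (f N) with h | h
    · obtain ⟨t, ht, hft⟩ := ih h
      exact ⟨t, ht.trans N.le_succ, hft⟩
    · exact ⟨N + 1, le_rfl, by have := hf N; omega⟩

theorem prod_range_min_add_one_of_le {k n : ℕ} (h : n ≤ k) :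
    ∏ i ∈ range n, min (i + 1) k = n.factorial := by
  rw [← prod_range_add_one_eq_factorial]
  exact prod_congr rfl fun i hi => min_eq_left (by rw [mem_range] at hi; omega)

theorem prod_range_min_add_one_of_ge {k n : ℕ} (h : k ≤ n) :
    ∏ i ∈ range n, min (i + 1) k = k.factorial * k ^ (n - k) := by
  obtain ⟨m, rfl⟩ := Nat.exists_eq_add_of_le h
  rw [prod_range_add, prod_range_min_add_one_of_le le_rfl, Nat.add_sub_cancel_left,
    prod_congr rfl fun i _ => min_eq_right (by omega), prod_const, card_range]

variable {k n : ℕ}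

/-- `v` is a natural number so that it may be `n`, the value about to be inserted when passing
from `S_n` to `S_{n+1}`. -/
def recoilWindow (k : ℕ) {n : ℕ} (v : ℕ) : Finset (Fin n) :=
  {u | (u : ℕ) < v ∧ v - u < k}

theorem mem_recoilWindow {v : ℕ} {u : Fin n} : u ∈ recoilWindow k v ↔ (u : ℕ) < v ∧ v - u < k := by
  simp [recoilWindow]

theorem card_recoilWindow {v : ℕ} (hv : v ≤ n) :
    #(recoilWindow k v : Finset (Fin n)) = v - (v + 1 - k) := by
  rw [← card_map Fin.valEmbedding, ← Nat.card_Ico]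
  congr 1
  ext x
  simp only [mem_map, mem_recoilWindow, Fin.valEmbedding_apply, mem_Ico]
  constructor
  · rintro ⟨u, hu, rfl⟩
    omega
  · intro hx
    exact ⟨⟨x, by omega⟩, by simp only; omega, rfl⟩

theorem map_castSuccEmb_recoilWindow {v : ℕ} (hv : v ≤ n) :
    (recoilWindow k v : Finset (Fin n)).map Fin.castSuccEmb = recoilWindow k v := by
  ext u
  simp only [mem_map, mem_recoilWindow, Fin.coe_castSuccEmb]
  constructor
  · rintro ⟨u, hu, rfl⟩
    simpa using hu
  · intro hu
    exact ⟨⟨u, by omega⟩, hu, rfl⟩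

def recoilCode (k : ℕ) (σ : Equiv.Perm (Fin n)) (v : Fin n) : ℕ :=
  #{u ∈ recoilWindow k v | σ.symm u < σ.symm v}

theorem recoilCode_lt_min (hk : 1 ≤ k) (σ : Equiv.Perm (Fin n)) (v : Fin n) :
    recoilCode k σ v < min ((v : ℕ) + 1) k := by
  have := (card_filter_le (recoilWindow k v) fun u => σ.symm u < σ.symm v).trans_eq
    (card_recoilWindow v.isLt.le)
  unfold recoilCode
  omega

theorem recoilCode_eq_iff {σ τ : Equiv.Perm (Fin n)} :
    recoilCode k σ = recoilCode k τ ↔ recoilEquiv k n σ τ := by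
  refine ⟨fun h a b => ?_, fun h => funext fun v => ?_⟩
  · induction b using WellFoundedLT.induction generalizing a with
    | _ b ih =>
    intro hab hbk
    refine lt_iff_lt_of_card_filter_lt_eq σ.symm.injective τ.symm.injective
      (mem_recoilWindow.2 ⟨hab, hbk⟩) (by simp [mem_recoilWindow]) ?_ (congrFun h b)
    intro x hx y hy hxy
    rw [mem_recoilWindow] at hx hy
    rcases lt_or_gt_of_ne (Fin.val_injective.ne hxy) with hlt | hlt
    · exact ih y (Fin.lt_def.2 hy.1) x hlt (by omega)
    · exact lt_iff_lt_swap σ.symm.injective τ.symm.injective hxy.symm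
        (ih x (Fin.lt_def.2 hx.1) y hlt (by omega))
  · exact congrArg card <| filter_congr fun u hu =>
      h u v (mem_recoilWindow.1 hu).1 (mem_recoilWindow.1 hu).2

/-- The one-line word of `σ` with the new largest value `n` written at position `p`. -/
def insertMax (σ : Equiv.Perm (Fin n)) (p : Fin (n + 1)) : Equiv.Perm (Fin (n + 1)) :=
  (finSuccEquiv' p).trans ((Equiv.optionCongr σ).trans (finSuccEquiv' (Fin.last n)).symm)

theorem insertMax_symm_last (σ : Equiv.Perm (Fin n)) (p : Fin (n + 1)) :
    (insertMax σ p).symm (Fin.last n) = p := by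
  simp only [insertMax, Equiv.symm_trans_apply, Equiv.symm_symm, finSuccEquiv'_at,
    ← Equiv.optionCongr_symm, Equiv.optionCongr_apply, Option.map_none, finSuccEquiv'_symm_none]

theorem insertMax_symm_castSucc (σ : Equiv.Perm (Fin n)) (p : Fin (n + 1)) (v : Fin n) :
    (insertMax σ p).symm v.castSucc = p.succAbove (σ.symm v) := by
  rw [← Fin.succAbove_last]
  simp only [insertMax, Equiv.symm_trans_apply, Equiv.symm_symm, finSuccEquiv'_succAbove,
    ← Equiv.optionCongr_symm, Equiv.optionCongr_apply, Option.map_some, finSuccEquiv'_symm_some]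

theorem recoilCode_insertMax_castSucc (σ : Equiv.Perm (Fin n)) (p : Fin (n + 1)) (v : Fin n) :
    recoilCode k (insertMax σ p) v.castSucc = recoilCode k σ v := by
  rw [recoilCode, Fin.val_castSucc, ← map_castSuccEmb_recoilWindow v.isLt.le, filter_map,
    card_map, recoilCode]
  congr 1
  refine filter_congr fun u _ => ?_
  simp [insertMax_symm_castSucc, Fin.succAbove_lt_succAbove_iff]

def numBefore (s : Finset (Fin n)) (σ : Equiv.Perm (Fin n)) (t : ℕ) : ℕ :=
  #{u ∈ s | (σ.symm u : ℕ) < t}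

theorem numBefore_zero (s : Finset (Fin n)) (σ : Equiv.Perm (Fin n)) : numBefore s σ 0 = 0 := by
  simp [numBefore]

theorem numBefore_add_one_le (s : Finset (Fin n)) (σ : Equiv.Perm (Fin n)) (t : ℕ) :
    numBefore s σ (t + 1) ≤ numBefore s σ t + 1 := by
  have hsub : {u ∈ s | (σ.symm u : ℕ) < t + 1} ⊆
      {u ∈ s | (σ.symm u : ℕ) < t} ∪ {u ∈ s | (σ.symm u : ℕ) = t} := fun u hu => by
    rw [mem_filter] at hu
    rw [mem_union, mem_filter, mem_filter]
    exact (Nat.lt_succ_iff_lt_or_eq.1 hu.2).imp (⟨hu.1, ·⟩) (⟨hu.1, ·⟩)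
  have hat : #{u ∈ s | (σ.symm u : ℕ) = t} ≤ 1 := card_le_one.2 fun a ha b hb => by
    rw [mem_filter] at ha hb
    exact σ.symm.injective (Fin.ext (ha.2.trans hb.2.symm))
  exact (card_le_card hsub).trans ((card_union_le _ _).trans (Nat.add_le_add_left hat _))

theorem numBefore_of_le (s : Finset (Fin n)) (σ : Equiv.Perm (Fin n)) {t : ℕ} (ht : n ≤ t) :
    numBefore s σ t = #s :=
  congrArg card <| filter_true_of_mem fun u _ => (σ.symm u).isLt.trans_le ht

theorem recoilCode_insertMax_last (σ : Equiv.Perm (Fin n)) (p : Fin (n + 1)) :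
    recoilCode k (insertMax σ p) (Fin.last n) = numBefore (recoilWindow k n) σ p := by
  rw [recoilCode, Fin.val_last, ← map_castSuccEmb_recoilWindow le_rfl, filter_map, card_map,
    numBefore]
  congr 1
  refine filter_congr fun u _ => ?_
  simp only [Fin.coe_castSuccEmb, comp_apply, insertMax_symm_castSucc, insertMax_symm_last,
    Fin.succAbove_lt_iff_castSucc_lt]
  exact Fin.lt_def

/-- Insert the values `0, 1, …, n - 1` one after the other, each at a position that puts the
prescribed number of its window before it; such a position exists because that number grows by
at most one from each position to the next. -/
theorem exists_recoilCode_eq :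
    ∀ {n : ℕ} (d : Fin n → ℕ), (∀ v, d v < min ((v : ℕ) + 1) k) →
      ∃ σ : Equiv.Perm (Fin n), recoilCode k σ = d
  | 0, d, _ => ⟨1, funext fun v => v.elim0⟩
  | n + 1, d, hd => by
    obtain ⟨σ, hσ⟩ := exists_recoilCode_eq (fun v => d v.castSucc) fun v => by
      simpa using hd v.castSucc
    have hlast : d (Fin.last n) ≤ numBefore (recoilWindow k n) σ n := by
      rw [numBefore_of_le _ _ le_rfl, card_recoilWindow le_rfl]
      have := hd (Fin.last n)
      rw [Fin.val_last] at this
      omega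
    obtain ⟨t, ht, hdt⟩ := exists_eq_of_le_of_forall_add_one_le (numBefore_zero _ σ)
      (numBefore_add_one_le _ σ) hlast
    refine ⟨insertMax σ ⟨t, by omega⟩, funext fun v => ?_⟩
    induction v using Fin.lastCases with
    | last => rw [recoilCode_insertMax_last, ← hdt]
    | cast v => rw [recoilCode_insertMax_castSucc, hσ]

theorem range_recoilCode (hk : 1 ≤ k) :
    Set.range (recoilCode k : Equiv.Perm (Fin n) → Fin n → ℕ) =
      (Fintype.piFinset fun v : Fin n => range (min ((v : ℕ) + 1) k) : Set (Fin n → ℕ)) := by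
  ext d
  simp only [Set.mem_range, mem_coe, Fintype.mem_piFinset, mem_range]
  exact ⟨fun ⟨σ, hσ⟩ v => hσ ▸ recoilCode_lt_min hk σ v, exists_recoilCode_eq d⟩

/-- the number of `≡_k` classes on `S_n` is `n!` if `n ≤ k`
and `k! · k^(n-k)` if `n ≥ k`. -/
theorem num_recoil_classes (k n : ℕ) (hk : 2 ≤ k) :
    (n ≤ k → Nat.card (Quotient (recoilSetoid k n)) = Nat.factorial n) ∧
    (k ≤ n → Nat.card (Quotient (recoilSetoid k n)) =
      Nat.factorial k * k ^ (n - k)) := by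
  have hker : recoilSetoid k n = Setoid.ker (recoilCode k) :=
    Setoid.ext fun _ _ => recoilCode_eq_iff.symm
  have hcard : Nat.card (Quotient (recoilSetoid k n)) = ∏ i ∈ range n, min (i + 1) k := by
    rw [hker, Nat.card_congr (Setoid.quotientKerEquivRange _), range_recoilCode (by omega),
      Nat.card_coe_set_eq, Set.ncard_coe_finset, Fintype.card_piFinset]
    simpa only [card_range] using Fin.prod_univ_eq_prod_range (fun i => min (i + 1) k) n
  exact ⟨fun h => hcard.trans (prod_range_min_add_one_of_le h),
    fun h => hcard.trans (prod_range_min_add_one_of_ge h)⟩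
end

section
/- For every integer k ≥ 2 and every n ≥ 0, a word (d_1, …, d_n) with entries in {1, …, k} is the k-descent code DC_k(σ) of some permutation σ ∈ S_n if and only if max(k − ℓ + 1, 1) ≤ d_ℓ ≤ k for every ℓ with 1 ≤ ℓ ≤ n. -/
/-! Build `σ ∈ S_{n+1}` from `τ ∈ S_n` by appending a last value `v + 1` and shifting the values
of `τ` above `v` up by one. This leaves the first `n` letters of the descent code unchanged, while
the last letter is one more than the number of entries among `τ̃(n + 2 - k), …, τ̃(n)` that are at
most `v`. As `v` runs from `0` to `n` that count climbs in unit steps (`τ̃` is injective) from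
`k - (n + 1)` to `k - 1`, so it takes every admissible value. -/

open Finset

theorem Nat.exists_eq_of_map_add_one_le {f : ℕ → ℕ} (hf : ∀ i, f (i + 1) ≤ f i + 1) {N r : ℕ}
    (h₀ : f 0 ≤ r) (hN : r ≤ f N) : ∃ i ≤ N, f i = r := by
  induction N with
  | zero => exact ⟨0, le_rfl, le_antisymm h₀ hN⟩
  | succ N ih =>
    by_cases h : r ≤ f N
    · obtain ⟨i, hi, rfl⟩ := ih h
      exact ⟨i, by omega, rfl⟩
    · exact ⟨N + 1, le_rfl, by have := hf N; omega⟩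

namespace DescentCode

variable {n : ℕ}

lemma extPerm_eq_self {σ : Equiv.Perm (Fin n)} {j : ℤ} (h : ¬(0 < j ∧ j ≤ n)) :
    extPerm σ j = j :=
  dif_neg h

lemma extPerm_of_nonpos (σ : Equiv.Perm (Fin n)) {j : ℤ} (h : j ≤ 0) : extPerm σ j = j :=
  extPerm_eq_self (by omega)

lemma extPerm_val_add_one (σ : Equiv.Perm (Fin n)) (i : Fin n) :
    extPerm σ ((i : ℕ) + 1) = (σ i : ℕ) + 1 := by
  rw [extPerm, dif_pos (by omega)]
  simp

lemma exists_val_add_one_eq {j : ℤ} (h₀ : 0 < j) (hn : j ≤ n) :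
    ∃ i : Fin n, ((i : ℕ) : ℤ) + 1 = j :=
  ⟨⟨(j - 1).toNat, by omega⟩, by simp only [Int.pred_toNat]; omega⟩

lemma extPerm_mem_Icc (σ : Equiv.Perm (Fin n)) {j : ℤ} (h₀ : 0 < j) (hn : j ≤ n) :
    0 < extPerm σ j ∧ extPerm σ j ≤ n := by
  obtain ⟨i, rfl⟩ := exists_val_add_one_eq h₀ hn
  rw [extPerm_val_add_one]
  omega

lemma extPerm_injective (σ : Equiv.Perm (Fin n)) : Function.Injective (extPerm σ) := by
  intro i j hij
  by_cases hi : 0 < i ∧ i ≤ n <;> by_cases hj : 0 < j ∧ j ≤ n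
  · obtain ⟨a, rfl⟩ := exists_val_add_one_eq hi.1 hi.2
    obtain ⟨b, rfl⟩ := exists_val_add_one_eq hj.1 hj.2
    rw [extPerm_val_add_one, extPerm_val_add_one, add_left_inj, Nat.cast_inj, Fin.val_inj,
      σ.apply_eq_iff_eq] at hij
    rw [hij]
  · have := extPerm_mem_Icc σ hi.1 hi.2
    rw [hij, extPerm_eq_self hj] at this
    exact absurd this hj
  · have := extPerm_mem_Icc σ hj.1 hj.2
    rw [← hij, extPerm_eq_self hi] at this
    exact absurd this hi
  · rwa [extPerm_eq_self hi, extPerm_eq_self hj] at hij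

lemma DC_le (k : ℕ) (σ : Equiv.Perm (Fin n)) (ℓ : Fin n) : DC k σ ℓ ≤ k := by
  refine (card_filter_le _ _).trans ?_
  rw [Int.card_Icc]
  omega

/-- The `k - (ℓ + 1)` window positions `j ≤ 0` carry the values `σ̃ j = j ≤ 0 < σ̃ (ℓ + 1)`. -/
lemma sub_add_one_le_DC {k : ℕ} (hk : 0 < k) (σ : Equiv.Perm (Fin n)) (ℓ : Fin n) :
    k - ((ℓ : ℕ) + 1) + 1 ≤ DC k σ ℓ := by
  have hpos := (extPerm_mem_Icc σ (j := (ℓ : ℕ) + 1) (by omega) (by omega)).1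
  have hsub : insert (((ℓ : ℕ) : ℤ) + 1) (Icc (((ℓ : ℕ) : ℤ) + 1 - k + 1) 0) ⊆
      (Icc (((ℓ : ℕ) : ℤ) + 1 - k + 1) ((ℓ : ℕ) + 1)).filter
        (fun j => extPerm σ j ≤ extPerm σ ((ℓ : ℕ) + 1)) := by
    intro j hj
    simp only [mem_insert, mem_Icc, mem_filter] at hj ⊢
    rcases hj with rfl | ⟨hj₁, hj₀⟩
    · omega
    · rw [extPerm_of_nonpos σ hj₀]; omega
  have := card_le_card hsub
  rw [card_insert_of_notMem (by simp), Int.card_Icc] at this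
  exact le_trans (by omega) this

def shiftAbove (v x : ℤ) : ℤ := if x ≤ v then x else x + 1

lemma shiftAbove_strictMono (v : ℤ) : StrictMono (shiftAbove v) := by
  intro x y hxy
  unfold shiftAbove
  split_ifs <;> omega

lemma shiftAbove_le_add_one_iff {v x : ℤ} : shiftAbove v x ≤ v + 1 ↔ x ≤ v := by
  unfold shiftAbove
  split_ifs <;> omega

/-- The one-line word of `τ` with the values `≥ v` raised by one, followed by the letter `v`. -/
def insertLast (τ : Equiv.Perm (Fin n)) (v : Fin (n + 1)) : Equiv.Perm (Fin (n + 1)) :=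
  finSuccEquivLast.trans ((Equiv.optionCongr τ).trans (finSuccEquiv' v).symm)

@[simp]
lemma insertLast_castSucc (τ : Equiv.Perm (Fin n)) (v : Fin (n + 1)) (i : Fin n) :
    insertLast τ v i.castSucc = v.succAbove (τ i) := by
  simp [insertLast]

@[simp]
lemma insertLast_last (τ : Equiv.Perm (Fin n)) (v : Fin (n + 1)) :
    insertLast τ v (Fin.last n) = v := by
  simp [insertLast]

lemma extPerm_insertLast_of_le (τ : Equiv.Perm (Fin n)) (v : Fin (n + 1)) {j : ℤ} (hj : j ≤ n) :
    extPerm (insertLast τ v) j = shiftAbove v (extPerm τ j) := by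
  by_cases h₀ : 0 < j
  · obtain ⟨i, rfl⟩ := exists_val_add_one_eq h₀ hj
    have := extPerm_val_add_one (insertLast τ v) i.castSucc
    rw [Fin.val_castSucc, insertLast_castSucc] at this
    rw [this, extPerm_val_add_one, shiftAbove]
    rcases lt_or_ge (τ i).castSucc v with h | h
    · rw [Fin.lt_def, Fin.val_castSucc] at h
      rw [Fin.succAbove_of_castSucc_lt _ _ (by simpa [Fin.lt_def]), Fin.val_castSucc,
        if_pos (by omega)]
    · rw [Fin.le_def, Fin.val_castSucc] at h
      rw [Fin.succAbove_of_le_castSucc _ _ (by simpa [Fin.le_def]), Fin.val_succ,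
        if_neg (by omega)]
      push_cast
      ring
  · rw [extPerm_of_nonpos _ (by omega), extPerm_of_nonpos _ (by omega), shiftAbove,
      if_pos (by omega)]

lemma extPerm_insertLast_last (τ : Equiv.Perm (Fin n)) (v : Fin (n + 1)) :
    extPerm (insertLast τ v) ((n : ℤ) + 1) = (v : ℕ) + 1 := by
  simpa using extPerm_val_add_one (insertLast τ v) (Fin.last n)

lemma DC_insertLast_castSucc (k : ℕ) (τ : Equiv.Perm (Fin n)) (v : Fin (n + 1)) (ℓ : Fin n) :
    DC k (insertLast τ v) ℓ.castSucc = DC k τ ℓ := by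
  unfold DC
  rw [Fin.val_castSucc]
  refine congrArg card (filter_congr fun j hj => ?_)
  rw [mem_Icc] at hj
  rw [extPerm_insertLast_of_le _ _ (by omega), extPerm_insertLast_of_le _ _ (by omega),
    (shiftAbove_strictMono _).le_iff_le]

noncomputable def insertionRank (k : ℕ) (τ : Equiv.Perm (Fin n)) (x : ℤ) : ℕ :=
  ((Icc ((n : ℤ) + 2 - k) n).filter (fun j => extPerm τ j ≤ x)).card

lemma DC_insertLast_last {k : ℕ} (hk : 0 < k) (τ : Equiv.Perm (Fin n)) (v : Fin (n + 1)) :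
    DC k (insertLast τ v) (Fin.last n) = insertionRank k τ (v : ℕ) + 1 := by
  have hIcc :
      Icc ((n : ℤ) + 1 - k + 1) (n + 1) = insert ((n : ℤ) + 1) (Icc ((n : ℤ) + 2 - k) n) := by
    ext j
    simp only [mem_Icc, mem_insert]
    omega
  unfold DC insertionRank
  rw [Fin.val_last, hIcc, filter_insert, if_pos le_rfl, card_insert_of_notMem (by simp),
    extPerm_insertLast_last]
  congr 2
  refine filter_congr fun j hj => ?_
  rw [mem_Icc] at hj
  rw [extPerm_insertLast_of_le _ _ hj.2, shiftAbove_le_add_one_iff]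

lemma insertionRank_zero (k : ℕ) (τ : Equiv.Perm (Fin n)) : insertionRank k τ 0 = k - (n + 1) := by
  have : (Icc ((n : ℤ) + 2 - k) n).filter (fun j => extPerm τ j ≤ 0) = Icc ((n : ℤ) + 2 - k) 0 := by
    ext j
    simp only [mem_filter, mem_Icc]
    constructor
    · rintro ⟨⟨hlo, hhi⟩, hj⟩
      refine ⟨hlo, not_lt.1 fun h₀ => ?_⟩
      have := (extPerm_mem_Icc τ h₀ hhi).1
      omega
    · rintro ⟨hlo, h₀⟩
      rw [extPerm_of_nonpos τ h₀]
      omega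
  rw [insertionRank, this, Int.card_Icc]
  omega

lemma insertionRank_natCast {k : ℕ} (hk : 0 < k) (τ : Equiv.Perm (Fin n)) :
    insertionRank k τ n = k - 1 := by
  rw [insertionRank, filter_true_of_mem fun j hj => ?_, Int.card_Icc]
  · omega
  rw [mem_Icc] at hj
  by_cases h₀ : 0 < j
  · exact (extPerm_mem_Icc τ h₀ hj.2).2
  · rw [extPerm_of_nonpos τ (by omega)]
    exact hj.2

lemma insertionRank_add_one_le (k : ℕ) (τ : Equiv.Perm (Fin n)) (x : ℤ) :
    insertionRank k τ (x + 1) ≤ insertionRank k τ x + 1 := by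
  unfold insertionRank
  set s := Icc ((n : ℤ) + 2 - k) n
  have hsplit : s.filter (fun j => extPerm τ j ≤ x + 1) =
      s.filter (fun j => extPerm τ j ≤ x) ∪ s.filter (fun j => extPerm τ j = x + 1) := by
    rw [← filter_or]
    exact filter_congr fun j _ => by omega
  have hunique : (s.filter fun j => extPerm τ j = x + 1).card ≤ 1 :=
    card_le_one.mpr fun a ha b hb =>
      extPerm_injective τ ((mem_filter.1 ha).2.trans (mem_filter.1 hb).2.symm)
  rw [hsplit]
  exact (card_union_le _ _).trans (by omega)

lemma exists_DC_eq {k : ℕ} (hk : 0 < k) (d : Fin n → ℕ)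
    (hd : ∀ ℓ : Fin n, k - ((ℓ : ℕ) + 1) + 1 ≤ d ℓ ∧ d ℓ ≤ k) :
    ∃ σ : Equiv.Perm (Fin n), DC k σ = d := by
  induction n with
  | zero => exact ⟨1, funext fun ℓ => ℓ.elim0⟩
  | succ n ih =>
    obtain ⟨τ, hτ⟩ := ih (fun ℓ => d ℓ.castSucc) fun ℓ => by simpa using hd ℓ.castSucc
    obtain ⟨hlo, hhi⟩ := hd (Fin.last n)
    rw [Fin.val_last] at hlo
    obtain ⟨v, hv, hvd⟩ := Nat.exists_eq_of_map_add_one_le (f := fun v : ℕ => insertionRank k τ v)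
      (fun v => by exact_mod_cast insertionRank_add_one_le k τ v) (N := n) (r := d (Fin.last n) - 1)
      (by simp only [Nat.cast_zero, insertionRank_zero]; omega)
      (by simp only [insertionRank_natCast hk]; omega)
    refine ⟨insertLast τ ⟨v, by omega⟩, funext (Fin.lastCases ?_ fun ℓ => ?_)⟩
    · rw [DC_insertLast_last hk]
      simp only at hvd ⊢
      omega
    · rw [DC_insertLast_castSucc, hτ]

end DescentCode

/-- a word `(d_1, …, d_n)` with entries in `{1, …, k}` is the
`k`-descent code of some `σ ∈ S_n` iff `max (k - ℓ + 1) 1 ≤ d_ℓ ≤ k` for all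
`1 ≤ ℓ ≤ n` (here `d ℓ` is `d_{ℓ+1}`, `ℓ : Fin n` being 0-indexed). -/
theorem descent_code_characterization (k n : ℕ) (hk : 2 ≤ k) (d : Fin n → ℕ) :
    (∃ σ : Equiv.Perm (Fin n), DC k σ = d) ↔
      (∀ ℓ : Fin n, max (k - ((ℓ : ℕ) + 1) + 1) 1 ≤ d ℓ ∧ d ℓ ≤ k) := by
  have hk₀ : 0 < k := by omega
  simp only [max_eq_left (Nat.le_add_left 1 _)]
  constructor
  · rintro ⟨σ, rfl⟩ ℓ
    exact ⟨DescentCode.sub_add_one_le_DC hk₀ σ ℓ, DescentCode.DC_le k σ ℓ⟩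
  · exact DescentCode.exists_DC_eq hk₀ d
end

section
/- For every integer k ≥ 2, every n ≥ 0, and all σ, τ ∈ S_n, one has σ ≡_k τ if and only if DC_k(σ⁻¹) = DC_k(τ⁻¹), i.e., two permutations are k-recoil equivalent exactly when their inverses have the same k-descent code. -/
/-!
Up to a number of out-of-range positions that does not depend on `σ`, `DC_k(σ⁻¹)(ℓ)` is the rank
of `σ⁻¹(ℓ)` among the `σ⁻¹(a)` for the values `a ∈ (ℓ - k, ℓ]`. Recoil equivalence fixes these
ranks. Conversely, by induction on `b`, `σ⁻¹` and `τ⁻¹` already order the values of `(b - k, b)`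
alike; the rank of `σ⁻¹(b)` among them then decides on which side of each of them `σ⁻¹(b)` lies.
-/

open Finset

section Rank

variable {α β : Type*} [LinearOrder β]

theorem lt_iff_card_filter_le_le_card_filter_lt (f : α → β) {W : Finset α} {a : α} (ha : a ∈ W)
    (b : α) : f a < f b ↔ #{x ∈ W | f x ≤ f a} ≤ #{x ∈ W | f x < f b} := by
  constructor
  · intro hab
    exact card_le_card fun x hx => by
      simp only [mem_filter] at hx ⊢
      exact ⟨hx.1, hx.2.trans_lt hab⟩
  · intro hcard
    by_contra! hba
    refine hcard.not_gt (card_lt_card ?_)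
    rw [ssubset_iff_of_subset fun x hx => ?_]
    · exact ⟨a, by simp [ha], by simp [hba]⟩
    · simp only [mem_filter] at hx ⊢
      exact ⟨hx.1, (hx.2.trans_le hba).le⟩

theorem card_filter_le_eq_card_filter_lt_erase_add_one {f : α → β} (hf : Function.Injective f)
    [DecidableEq α] {W : Finset α} {b : α} (hb : b ∈ W) :
    #{x ∈ W | f x ≤ f b} = #{x ∈ W.erase b | f x < f b} + 1 := by
  have : {x ∈ W | f x ≤ f b} = insert b {x ∈ W.erase b | f x < f b} := by
    ext x
    by_cases hx : x = b
    · simp [hx, hb]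
    · simp [hx, le_iff_lt_or_eq, hf.eq_iff]
  rw [this, card_insert_of_notMem (by simp)]

end Rank

theorem Equiv.Perm.symm_le_symm_iff_of_lt_iff {α : Type*} [LinearOrder α] {σ τ : Equiv.Perm α}
    {x y : α} (hxy : x < y → (σ.symm x < σ.symm y ↔ τ.symm x < τ.symm y))
    (hyx : y < x → (σ.symm y < σ.symm x ↔ τ.symm y < τ.symm x)) :
    σ.symm x ≤ σ.symm y ↔ τ.symm x ≤ τ.symm y := by
  rcases lt_trichotomy x y with h | rfl | h
  · simp only [le_iff_lt_or_eq, σ.symm.injective.eq_iff, τ.symm.injective.eq_iff, h.ne, hxy h,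
      or_false]
  · simp
  · simpa only [not_lt] using (hyx h).not

theorem extPerm_of_nonpos {n : ℕ} (σ : Equiv.Perm (Fin n)) {i : ℤ} (hi : i ≤ 0) :
    extPerm σ i = i :=
  dif_neg (by omega)

theorem extPerm_val_add_one {n : ℕ} (σ : Equiv.Perm (Fin n)) (a : Fin n) :
    extPerm σ ((a : ℤ) + 1) = (σ a : ℤ) + 1 := by
  rw [extPerm, dif_pos ⟨by omega, by omega⟩]
  congr 3
  ext
  simp

def window (k : ℕ) {n : ℕ} (ℓ : Fin n) : Finset (Fin n) :=
  {a | a ≤ ℓ ∧ (ℓ : ℕ) - a < k}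

@[simp]
theorem mem_window {k n : ℕ} {ℓ a : Fin n} : a ∈ window k ℓ ↔ a ≤ ℓ ∧ (ℓ : ℕ) - a < k := by
  simp [window]

/-- Window positions `j ≤ 0` are fixed by `extPerm π` and always count; the others are `a + 1`
with `a ∈ window k ℓ`. -/
theorem DC_eq_card_Icc_add_card_window (k : ℕ) {n : ℕ} (π : Equiv.Perm (Fin n)) (ℓ : Fin n) :
    DC k π ℓ = #(Icc ((ℓ : ℤ) + 1 - k + 1) 0) + #{a ∈ window k ℓ | π a ≤ π ℓ} := by
  rw [DC, extPerm_val_add_one, ← card_filter_add_card_filter_not (fun j : ℤ => j ≤ 0)]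
  congr 1
  · congr 1
    ext j
    simp only [mem_filter, mem_Icc]
    constructor
    · rintro ⟨⟨⟨hlo, -⟩, -⟩, hj⟩
      exact ⟨hlo, hj⟩
    · rintro ⟨hlo, hj⟩
      rw [extPerm_of_nonpos π hj]
      exact ⟨⟨⟨hlo, by omega⟩, by omega⟩, hj⟩
  · symm
    refine card_bij (fun a _ => (a : ℤ) + 1) (fun a ha => ?_) (fun a _ b _ h => ?_) (fun j hj => ?_)
    · simp only [mem_filter, mem_window, Fin.le_def] at ha
      simp only [mem_filter, mem_Icc, extPerm_val_add_one]
      omega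
    · simpa [Fin.ext_iff] using h
    · simp only [mem_filter, mem_Icc] at hj
      obtain ⟨⟨⟨hlo, hhi⟩, hle⟩, hpos⟩ := hj
      obtain ⟨m, rfl⟩ : ∃ m : ℕ, j = m + 1 := ⟨(j - 1).toNat, by omega⟩
      have hm : m < n := by omega
      rw [show (m : ℤ) + 1 = ((⟨m, hm⟩ : Fin n) : ℤ) + 1 from rfl, extPerm_val_add_one] at hle
      refine ⟨⟨m, hm⟩, ?_, rfl⟩
      simp only [mem_filter, mem_window, Fin.le_def] at hle ⊢
      omega

theorem recoilEquiv_iff_card_filter_window (k n : ℕ) (σ τ : Equiv.Perm (Fin n)) :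
    recoilEquiv k n σ τ ↔
      ∀ ℓ, #{a ∈ window k ℓ | σ.symm a ≤ σ.symm ℓ} = #{a ∈ window k ℓ | τ.symm a ≤ τ.symm ℓ} := by
  constructor
  · intro h ℓ
    congr 1
    refine filter_congr fun a ha => ?_
    rw [mem_window] at ha
    exact Equiv.Perm.symm_le_symm_iff_of_lt_iff (fun hlt => h a ℓ hlt (by omega))
      (fun hlt => absurd hlt ha.1.not_gt)
  · intro hcard a b hab hbk
    induction b using WellFoundedLT.induction generalizing a with
    | _ b ih =>
    set W := (window k b).erase b
    have mem_W {x : Fin n} : x ∈ W ↔ x < b ∧ (b : ℕ) - x < k := by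
      simp only [W, mem_erase, mem_window, lt_iff_le_and_ne]
      tauto
    have ha : a ∈ W := mem_W.2 ⟨hab, hbk⟩
    have hb : b ∈ window k b := mem_window.2 ⟨le_rfl, by omega⟩
    have hrank : #{x ∈ W | σ.symm x ≤ σ.symm a} = #{x ∈ W | τ.symm x ≤ τ.symm a} := by
      refine congrArg card (filter_congr fun x hx => ?_)
      obtain ⟨hxb, hxk⟩ := mem_W.1 hx
      exact Equiv.Perm.symm_le_symm_iff_of_lt_iff (fun hxa => ih a hab x hxa (by omega))
        (fun hax => ih x hxb a hax (by omega))
    have hbelow : #{x ∈ W | σ.symm x < σ.symm b} = #{x ∈ W | τ.symm x < τ.symm b} := by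
      have := hcard b
      rwa [card_filter_le_eq_card_filter_lt_erase_add_one σ.symm.injective hb,
        card_filter_le_eq_card_filter_lt_erase_add_one τ.symm.injective hb, add_left_inj] at this
    rw [lt_iff_card_filter_le_le_card_filter_lt _ ha, lt_iff_card_filter_le_le_card_filter_lt _ ha,
      hrank, hbelow]

theorem recoil_iff_inv_descent_code_general (k n : ℕ)
    (σ τ : Equiv.Perm (Fin n)) :
    recoilEquiv k n σ τ ↔ DC k σ⁻¹ = DC k τ⁻¹ := by
  simp only [recoilEquiv_iff_card_filter_window, funext_iff, DC_eq_card_Icc_add_card_window,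
    add_right_inj, Equiv.Perm.inv_def]

/-- `σ ≡_k τ` iff the inverses have the same `k`-descent code. -/
theorem recoil_iff_inv_descent_code (k n : ℕ) (hk : 2 ≤ k)
    (σ τ : Equiv.Perm (Fin n)) :
    recoilEquiv k n σ τ ↔ DC k σ⁻¹ = DC k τ⁻¹ :=
  recoil_iff_inv_descent_code_general k n σ τ
end

section
/- Let k ≥ 2 and n ≥ 0, and let R be the relation on S_n defined by: τ R σ if and only if there is an index 1 ≤ i ≤ n−1 such that |σ(i) − σ(i+1)| ≥ k and τ is obtained from the word σ(1)⋯σ(n) by exchanging the entries in positions i and i+1. Then for all σ, τ ∈ S_n, σ ≡_k τ if and only if σ and τ are related by the reflexive–transitive–symmetric closure of R, i.e., one can go from σ to τ by successively exchanging adjacent entries whose values differ by at least k. -/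
/-- The elementary exchange relation: `adjSwapRel k τ σ` holds iff `τ` is
obtained from the one-line word of `σ` by exchanging two adjacent entries
whose values differ by at least `k`. -/
def adjSwapRel (k : ℕ) {n : ℕ} (τ σ : Equiv.Perm (Fin n)) : Prop :=
  ∃ (i : ℕ) (h : i + 1 < n),
    ((σ ⟨i, Nat.lt_of_succ_lt h⟩ : ℕ) + k ≤ (σ ⟨i + 1, h⟩ : ℕ) ∨
     (σ ⟨i + 1, h⟩ : ℕ) + k ≤ (σ ⟨i, Nat.lt_of_succ_lt h⟩ : ℕ)) ∧
    τ = σ * Equiv.swap ⟨i, Nat.lt_of_succ_lt h⟩ ⟨i + 1, h⟩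

/-! An exchange of adjacent entries whose values differ by at least `k` never reverses two values
closer than `k`, so it preserves `≡_k`. Conversely, if `σ ≡_k τ` and `σ ≠ τ`, then `τ⁻¹ * σ` has a
descent at some adjacent positions `p, p + 1`; the values `σ p, σ (p + 1)` lie in opposite order in
`σ` and `τ`, so they differ by at least `k`, and exchanging them is an allowed move that removes one
inversion of `τ⁻¹ * σ`. Induction on the number of inversions concludes. -/

open Equiv Finset

section AdjacentSwap

variable {n : ℕ} {p q u v : Fin n}

theorem Fin.swap_lt_swap_of_lt (hpq : (q : ℕ) = p + 1) (huv : u < v) (hne : ¬(u = p ∧ v = q)) :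
    swap p q u < swap p q v := by
  rw [swap_apply_def, swap_apply_def]
  split_ifs <;> simp only [Fin.lt_def, Fin.ext_iff, not_and] at * <;> omega

theorem Fin.swap_lt_swap_iff (hpq : (q : ℕ) = p + 1) (hne : ¬(u = p ∧ v = q))
    (hne' : ¬(u = q ∧ v = p)) : swap p q u < swap p q v ↔ u < v := by
  refine ⟨fun h => ?_, fun h => Fin.swap_lt_swap_of_lt hpq h hne⟩
  rcases lt_trichotomy u v with huv | rfl | hvu
  · exact huv
  · exact absurd h (lt_irrefl _)
  · exact absurd h (Fin.swap_lt_swap_of_lt hpq hvu fun ⟨h₁, h₂⟩ => hne' ⟨h₂, h₁⟩).asymm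

theorem Equiv.Perm.exists_adjacent_descent {π : Perm (Fin n)} (hπ : π ≠ 1) :
    ∃ p q : Fin n, (q : ℕ) = p + 1 ∧ π q < π p := by
  by_contra! hasc
  refine hπ (Perm.ext fun x => ?_)
  cases n with
  | zero => exact x.elim0
  | succ n =>
    have hmono : StrictMono π := Fin.strictMono_iff_lt_succ.2 fun i =>
      (hasc _ _ rfl).lt_of_ne (π.injective.ne Fin.castSucc_lt_succ.ne)
    exact hmono.apply_eq

end AdjacentSwap

section Inversions

variable {n : ℕ}

def Equiv.Perm.inversions (π : Perm (Fin n)) : Finset (Fin n × Fin n) :=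
  univ.filter fun x => x.1 < x.2 ∧ π x.2 < π x.1

theorem Equiv.Perm.mem_inversions {π : Perm (Fin n)} {x : Fin n × Fin n} :
    x ∈ π.inversions ↔ x.1 < x.2 ∧ π x.2 < π x.1 := by
  simp [Perm.inversions]

theorem Equiv.Perm.card_inversions_mul_swap_lt {π : Perm (Fin n)} {p q : Fin n}
    (hpq : (q : ℕ) = p + 1) (hdesc : π q < π p) :
    (π * swap p q).inversions.card < π.inversions.card := by
  have hpq' : p < q := Fin.lt_def.2 (by omega)
  have hmem : (p, q) ∈ π.inversions := Perm.mem_inversions.2 ⟨hpq', hdesc⟩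
  calc (π * swap p q).inversions.card
      ≤ (π.inversions.erase (p, q)).card := by
        refine card_le_card_of_injOn (Prod.map (swap p q) (swap p q)) (fun x hx => ?_)
          ((swap p q).injective.prodMap (swap p q).injective).injOn
        obtain ⟨hlt, hinv⟩ := Perm.mem_inversions.1 hx
        have hne : ¬(x.1 = p ∧ x.2 = q) := by
          rintro ⟨h₁, h₂⟩
          simp only [Perm.mul_apply, h₁, h₂, swap_apply_left, swap_apply_right] at hinv
          exact hinv.asymm hdesc
        refine mem_erase.2 ⟨fun hx' => ?_, Perm.mem_inversions.2
          ⟨Fin.swap_lt_swap_of_lt hpq hlt hne, hinv⟩⟩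
        simp only [Prod.map, Prod.mk.injEq, swap_apply_eq_iff, swap_apply_left,
          swap_apply_right] at hx'
        exact (hx'.1 ▸ hx'.2 ▸ hlt).asymm hpq'
    _ < π.inversions.card := card_erase_lt_of_mem hmem

end Inversions

section Recoil

variable {k n : ℕ} {σ τ : Perm (Fin n)}

theorem recoilEquiv_equivalence : Equivalence (recoilEquiv k n) where
  refl _ _ _ _ _ := Iff.rfl
  symm h a b hab hbk := (h a b hab hbk).symm
  trans h h' a b hab hbk := (h a b hab hbk).trans (h' a b hab hbk)

theorem recoilEquiv_mul_swap {p q : Fin n} (hpq : (q : ℕ) = p + 1)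
    (hval : (σ p : ℕ) + k ≤ σ q ∨ (σ q : ℕ) + k ≤ σ p) :
    recoilEquiv k n σ (σ * swap p q) := by
  intro a b hab hbk
  have hsymm : ∀ x, (σ * swap p q).symm x = swap p q (σ.symm x) := fun _ => rfl
  rw [hsymm, hsymm, Fin.swap_lt_swap_iff hpq]
  all_goals
    rintro ⟨ha, hb⟩
    rw [symm_apply_eq] at ha hb
    subst ha hb
    omega

theorem adjSwapRel_mul_swap {p q : Fin n} (hpq : (q : ℕ) = p + 1)
    (hval : (σ p : ℕ) + k ≤ σ q ∨ (σ q : ℕ) + k ≤ σ p) :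
    adjSwapRel k (σ * swap p q) σ := by
  obtain ⟨p, hp⟩ := p
  obtain ⟨q, hq⟩ := q
  obtain rfl : q = p + 1 := hpq
  exact ⟨p, hq, hval, rfl⟩

theorem recoilEquiv_of_adjSwapRel (h : adjSwapRel k τ σ) : recoilEquiv k n σ τ := by
  obtain ⟨i, hi, hval, rfl⟩ := h
  exact recoilEquiv_mul_swap rfl hval

theorem recoilEquiv_of_eqvGen_adjSwapRel (h : Relation.EqvGen (adjSwapRel k) σ τ) :
    recoilEquiv k n σ τ := by
  induction h with
  | rel _ _ h => exact recoilEquiv_equivalence.symm (recoilEquiv_of_adjSwapRel h)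
  | refl => exact recoilEquiv_equivalence.refl _
  | symm _ _ _ ih => exact recoilEquiv_equivalence.symm ih
  | trans _ _ _ _ _ ih ih' => exact recoilEquiv_equivalence.trans ih ih'

theorem add_le_or_add_le_of_recoilEquiv (h : recoilEquiv k n σ τ) {p q : Fin n} (hpq : p < q)
    (hdesc : τ.symm (σ q) < τ.symm (σ p)) : (σ p : ℕ) + k ≤ σ q ∨ (σ q : ℕ) + k ≤ σ p := by
  by_contra! hclose
  rcases lt_or_gt_of_ne (Fin.val_injective.ne (σ.injective.ne hpq.ne)) with hlt | hgt
  · have := h (σ p) (σ q) hlt (by omega)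
    simp only [symm_apply_apply] at this
    exact (this.1 hpq).asymm hdesc
  · have := h (σ q) (σ p) hgt (by omega)
    simp only [symm_apply_apply] at this
    exact (this.2 hdesc).asymm hpq

theorem eqvGen_adjSwapRel_of_recoilEquiv (h : recoilEquiv k n σ τ) :
    Relation.EqvGen (adjSwapRel k) σ τ := by
  induction hN : (τ⁻¹ * σ).inversions.card using Nat.strong_induction_on generalizing σ with
  | _ N ih =>
    by_cases hπ : τ⁻¹ * σ = 1
    · rw [inv_mul_eq_one.1 hπ]
      exact .refl _
    obtain ⟨p, q, hpq, hdesc⟩ := Perm.exists_adjacent_descent hπ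
    have hval := add_le_or_add_le_of_recoilEquiv h (Fin.lt_def.2 (by omega)) hdesc
    have hfewer : (τ⁻¹ * (σ * swap p q)).inversions.card < N :=
      hN ▸ mul_assoc τ⁻¹ σ (swap p q) ▸ Perm.card_inversions_mul_swap_lt hpq hdesc
    have hswap := recoilEquiv_equivalence.symm (recoilEquiv_mul_swap hpq hval)
    have hrest := ih _ hfewer (recoilEquiv_equivalence.trans hswap h) rfl
    exact .trans _ _ _ (.symm _ _ (.rel _ _ (adjSwapRel_mul_swap hpq hval))) hrest

end Recoil

theorem recoil_iff_adjSwaps_general (k n : ℕ) (σ τ : Equiv.Perm (Fin n)) :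
    recoilEquiv k n σ τ ↔ Relation.EqvGen (adjSwapRel k) σ τ :=
  ⟨eqvGen_adjSwapRel_of_recoilEquiv, recoilEquiv_of_eqvGen_adjSwapRel⟩

/-- `σ ≡_k τ` iff one can go from `σ` to `τ` by successively
exchanging adjacent entries whose values differ by at least `k`
(reflexive–transitive–symmetric closure of the exchange relation). -/
theorem recoil_iff_adjSwaps (k n : ℕ) (hk : 2 ≤ k) (σ τ : Equiv.Perm (Fin n)) :
    recoilEquiv k n σ τ ↔ Relation.EqvGen (adjSwapRel k) σ τ :=
  recoil_iff_adjSwaps_general k n σ τ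
end

section
/- Let k ≥ 2 and n ≥ 0. For every equivalence class C of ≡_k on S_n there exist permutations α, ω ∈ C such that C = {σ ∈ S_n : Inv(α) ⊆ Inv(σ) ⊆ Inv(ω)}; in other words, every k-recoil class is an interval of the right weak order. -/
/-!
Swapping two adjacent entries that differ by at least `k` stays in the same `≡_k` class, and at
a descent it removes an inversion, so every class contains a `k`-minimal `α` (all descents
smaller than `k`) and dually a `k`-maximal `ω`.

Every inversion `(a, b)` of `α` is forced on the class: on the way from `b` to `a` in the word
of `α` some entry `c > a` is followed by an entry `≤ a`, so `c < a + k`. If `c ≥ b` the pair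
`(a, b)` is short, hence read off the class; otherwise `c` splits it into the inversions
`(a, c)` and `(c, b)`, which have smaller position gaps. Applied to `w₀ ω` (values complemented),
the same argument forces every non-inversion of `ω`. Conversely, `≡_k` only compares short
pairs, on which the inversion sets of `α` and `ω` agree with those of the class.
-/

open Equiv

theorem Nat.exists_mem_Ico_and_not_succ {P : ℕ → Prop} {p q : ℕ} (hpq : p ≤ q) (hp : P p)
    (hq : ¬ P q) : ∃ i ∈ Set.Ico p q, P i ∧ ¬ P (i + 1) := by
  induction q, hpq using Nat.le_induction with
  | base => exact absurd hp hq
  | succ q hpq ih =>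
    by_cases hPq : P q
    · exact ⟨q, ⟨hpq, q.lt_succ_self⟩, hPq, hq⟩
    · obtain ⟨i, ⟨hpi, hiq⟩, hi⟩ := ih hPq
      exact ⟨i, ⟨hpi, hiq.trans q.lt_succ_self⟩, hi⟩

section

variable {k n : ℕ} {σ τ : Perm (Fin n)}

theorem symm_lt_symm_iff_not_lt (σ : Perm (Fin n)) {a b : Fin n} (hab : a ≠ b) :
    σ.symm a < σ.symm b ↔ ¬ σ.symm b < σ.symm a := by
  rw [not_lt, (σ.symm.injective.ne hab).le_iff_lt]

theorem mem_invSet_iff_not_lt {a b : Fin n} :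
    (a, b) ∈ invSet σ ↔ a < b ∧ ¬ σ.symm a < σ.symm b :=
  and_congr_right fun hab => symm_lt_symm_iff_not_lt σ hab.ne'

theorem recoilEquiv.refl (σ : Perm (Fin n)) : recoilEquiv k n σ σ :=
  fun _ _ _ _ => Iff.rfl

theorem recoilEquiv.symm (h : recoilEquiv k n σ τ) : recoilEquiv k n τ σ :=
  fun a b hab hk => (h a b hab hk).symm

theorem recoilEquiv.trans {ρ : Perm (Fin n)} (h : recoilEquiv k n σ τ)
    (h' : recoilEquiv k n τ ρ) : recoilEquiv k n σ ρ :=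
  fun a b hab hk => (h a b hab hk).trans (h' a b hab hk)

theorem recoilEquiv_iff_mem_invSet :
    recoilEquiv k n σ τ ↔
      ∀ a b : Fin n, (b : ℕ) - a < k → ((a, b) ∈ invSet σ ↔ (a, b) ∈ invSet τ) := by
  simp only [mem_invSet_iff_not_lt, and_congr_right_iff, not_iff_not]
  exact ⟨fun h a b hk hab => h a b hab hk, fun h a b hab hk => h a b hk hab⟩

theorem symm_mul_swap_apply (σ : Perm (Fin n)) (i j v : Fin n) :
    (σ * swap i j).symm v = swap i j (σ.symm v) := by
  rw [Perm.mul_def, symm_trans_apply, symm_swap]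

theorem swap_lt_swap_iff_of_adjacent {i j x y : Fin n} (hij : (i : ℕ) + 1 = j)
    (hxy : ¬ (x = i ∧ y = j)) (hyx : ¬ (x = j ∧ y = i)) :
    swap i j x < swap i j y ↔ x < y := by
  simp only [swap_apply_def]
  split_ifs <;> simp only [Fin.ext_iff, Fin.lt_def] at * <;> omega

theorem recoilEquiv_mul_swap_s7 {i j : Fin n} (hij : (i : ℕ) + 1 = j)
    (hd : (σ j : ℕ) + k ≤ σ i) : recoilEquiv k n σ (σ * swap i j) := by
  intro a b hab hk
  rw [symm_mul_swap_apply, symm_mul_swap_apply,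
    swap_lt_swap_iff_of_adjacent hij] <;>
  simp only [symm_apply_eq] <;> rintro ⟨rfl, rfl⟩ <;> omega

theorem invSet_mul_swap_ssubset {i j : Fin n} (hij : (i : ℕ) + 1 = j) (hd : σ j < σ i) :
    invSet (σ * swap i j) ⊂ invSet σ := by
  have hij' : i < j := by rw [Fin.lt_def]; omega
  refine (Set.ssubset_iff_of_subset ?_).2 ⟨(σ j, σ i), ⟨hd, by simpa using hij'⟩, fun h => ?_⟩
  · rintro ⟨a, b⟩ ⟨hab, hba⟩
    refine ⟨hab, ?_⟩
    by_cases hx : σ.symm b = i ∧ σ.symm a = j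
    · rwa [hx.1, hx.2]
    rwa [symm_mul_swap_apply, symm_mul_swap_apply, swap_lt_swap_iff_of_adjacent hij hx] at hba
    rintro ⟨hb, ha⟩
    rw [symm_apply_eq] at ha hb
    subst ha hb
    exact hd.not_gt hab
  · exact hij'.not_gt (by simpa [symm_mul_swap_apply] using h.2)

theorem kMinimal.lt_add (hσ : kMinimal k σ) {i j : Fin n} (hij : (i : ℕ) + 1 = j) :
    (σ i : ℕ) < σ j + k := by
  obtain ⟨i, hi⟩ := i
  obtain ⟨j, hj⟩ := j
  simp only at hij
  subst hij
  exact not_le.1 fun h => hσ ⟨i, hj, h⟩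

theorem exists_recoilEquiv_kMinimal (k : ℕ) (σ : Perm (Fin n)) :
    ∃ α, recoilEquiv k n σ α ∧ kMinimal k α := by
  classical
  obtain ⟨α, hσα, hα⟩ := (Finset.univ.filter (recoilEquiv k n σ)).exists_min_image
    (fun α => (invSet α).ncard) ⟨σ, by simpa using recoilEquiv.refl σ⟩
  rw [Finset.mem_filter] at hσα
  refine ⟨α, hσα.2, fun ⟨i, hi, hd⟩ => ?_⟩
  have hne : α ⟨i + 1, hi⟩ ≠ α ⟨i, by omega⟩ := α.injective.ne (by simp)
  have hlt := Set.ncard_lt_ncard <| invSet_mul_swap_ssubset (σ := α) (i := ⟨i, by omega⟩)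
    (j := ⟨i + 1, hi⟩) rfl (lt_of_le_of_ne (Fin.le_def.2 (by omega)) hne)
  exact hlt.not_ge <| hα _ <|
    Finset.mem_filter.2 ⟨Finset.mem_univ _, hσα.2.trans (recoilEquiv_mul_swap_s7 rfl hd)⟩

theorem invSet_subset_of_kMinimal (hσ : kMinimal k σ) (h : recoilEquiv k n σ τ) :
    invSet σ ⊆ invSet τ := by
  suffices ∀ d, ∀ a b : Fin n, a < b → σ.symm b < σ.symm a →
      (σ.symm a : ℕ) - σ.symm b = d → τ.symm b < τ.symm a from
    fun ⟨a, b⟩ ⟨hab, hba⟩ => ⟨hab, this _ a b hab hba rfl⟩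
  intro d
  induction d using Nat.strong_induction_on with
  | _ d ih =>
  rintro a b hab hba rfl
  obtain ⟨r, ⟨hbr, hra⟩, ⟨hrn, hac⟩, hr⟩ :=
    Nat.exists_mem_Ico_and_not_succ (P := fun m => ∃ h : m < n, a < σ ⟨m, h⟩)
      (Fin.le_def.1 hba.le) ⟨(σ.symm b).isLt, by simpa using hab⟩ (fun ⟨_, h⟩ => by simp at h)
  set c := σ ⟨r, hrn⟩ with hc
  have hr1 : r + 1 < n := by omega
  have hca : (c : ℕ) < a + k := by
    have hle : σ ⟨r + 1, hr1⟩ ≤ a := not_lt.1 fun h => hr ⟨hr1, h⟩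
    have := hσ.lt_add (i := ⟨r, hrn⟩) (j := ⟨r + 1, hr1⟩) rfl
    rw [Fin.le_def] at hle
    omega
  rcases lt_or_ge c b with hcb | hbc
  · have hbr' : (σ.symm b : ℕ) < r := by
      refine lt_of_le_of_ne hbr fun h => hcb.ne ?_
      rw [hc, ← σ.apply_symm_apply b]
      exact congrArg σ (Fin.ext h.symm)
    have hcb' := ih (r - σ.symm b) (by omega) c b hcb (by simpa [hc, Fin.lt_def] using hbr')
      (by simp [hc])
    have hac' := ih (σ.symm a - r) (by omega) a c hac (by simpa [hc, Fin.lt_def] using hra)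
      (by simp [hc])
    exact hcb'.trans hac'
  · exact ((recoilEquiv_iff_mem_invSet.1 h a b (by omega)).1 ⟨hab, hba⟩).2

theorem revPerm_mul_symm_apply (σ : Perm (Fin n)) (v : Fin n) :
    (Fin.revPerm * σ).symm v = σ.symm v.rev :=
  rfl

theorem revPerm_mul_revPerm_mul (σ : Perm (Fin n)) : Fin.revPerm * (Fin.revPerm * σ) = σ := by
  ext
  simp

theorem kMinimal_revPerm_mul_iff : kMinimal k (Fin.revPerm * σ) ↔ kMaximal k σ := by
  simp only [kMinimal, kMaximal, Perm.mul_apply, Fin.revPerm_apply, Fin.val_rev]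
  refine not_congr (exists_congr fun i => exists_congr fun hi => ?_)
  have := (σ ⟨i, by omega⟩).isLt
  have := (σ ⟨i + 1, hi⟩).isLt
  omega

theorem recoilEquiv.revPerm_mul (h : recoilEquiv k n σ τ) :
    recoilEquiv k n (Fin.revPerm * σ) (Fin.revPerm * τ) := by
  intro a b hab hk
  have hne : a.rev ≠ b.rev := Fin.rev_injective.ne (Fin.ne_of_val_ne hab.ne)
  rw [revPerm_mul_symm_apply, revPerm_mul_symm_apply, revPerm_mul_symm_apply,
    revPerm_mul_symm_apply, symm_lt_symm_iff_not_lt σ hne, symm_lt_symm_iff_not_lt τ hne]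
  exact not_congr (h _ _ (Fin.rev_lt_rev.2 hab) (by simp only [Fin.val_rev]; omega))

theorem invSet_subset_of_revPerm_mul (h : invSet (Fin.revPerm * σ) ⊆ invSet (Fin.revPerm * τ)) :
    invSet τ ⊆ invSet σ := by
  rintro ⟨a, b⟩ ⟨hab, hτ⟩
  refine mem_invSet_iff_not_lt.2 ⟨hab, fun hσ => hτ.not_gt ?_⟩
  simpa [revPerm_mul_symm_apply] using
    (@h (b.rev, a.rev) ⟨Fin.rev_lt_rev.2 hab, by simpa [revPerm_mul_symm_apply] using hσ⟩).2

theorem exists_recoilEquiv_kMaximal (k : ℕ) (σ : Perm (Fin n)) :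
    ∃ ω, recoilEquiv k n σ ω ∧ kMaximal k ω := by
  obtain ⟨α, hα, hα_min⟩ := exists_recoilEquiv_kMinimal k (Fin.revPerm * σ)
  refine ⟨Fin.revPerm * α, ?_, kMinimal_revPerm_mul_iff.1 ?_⟩
  · simpa only [revPerm_mul_revPerm_mul] using hα.revPerm_mul
  · rwa [revPerm_mul_revPerm_mul]

theorem invSet_subset_of_kMaximal (hσ : kMaximal k σ) (h : recoilEquiv k n σ τ) :
    invSet τ ⊆ invSet σ :=
  invSet_subset_of_revPerm_mul <|
    invSet_subset_of_kMinimal (kMinimal_revPerm_mul_iff.2 hσ) h.revPerm_mul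

end

theorem recoil_class_is_interval_general (k n : ℕ)
    (σ : Equiv.Perm (Fin n)) :
    ∃ α ω : Equiv.Perm (Fin n), recoilEquiv k n σ α ∧ recoilEquiv k n σ ω ∧
      ∀ τ, recoilEquiv k n σ τ ↔ (invSet α ⊆ invSet τ ∧ invSet τ ⊆ invSet ω) := by
  obtain ⟨α, hα, hα_min⟩ := exists_recoilEquiv_kMinimal k σ
  obtain ⟨ω, hω, hω_max⟩ := exists_recoilEquiv_kMaximal k σ
  refine ⟨α, ω, hα, hω, fun τ => ⟨fun hτ => ?_, fun ⟨hατ, hτω⟩ => ?_⟩⟩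
  · exact ⟨invSet_subset_of_kMinimal hα_min (hα.symm.trans hτ),
      invSet_subset_of_kMaximal hω_max (hω.symm.trans hτ)⟩
  · rw [recoilEquiv_iff_mem_invSet] at hα hω ⊢
    exact fun a b hk => ⟨fun h => hατ ((hα a b hk).1 h), fun h => (hω a b hk).2 (hτω h)⟩

/-- every `≡_k` class is an interval of the right weak order:
there are `α, ω` in the class such that the class is exactly
`{τ : Inv(α) ⊆ Inv(τ) ⊆ Inv(ω)}`. -/
theorem recoil_class_is_interval (k n : ℕ) (hk : 2 ≤ k)
    (σ : Equiv.Perm (Fin n)) :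
    ∃ α ω : Equiv.Perm (Fin n), recoilEquiv k n σ α ∧ recoilEquiv k n σ ω ∧
      ∀ τ, recoilEquiv k n σ τ ↔ (invSet α ⊆ invSet τ ∧ invSet τ ⊆ invSet ω) :=
  recoil_class_is_interval_general k n σ
end

section
/- Let k ≥ 2 and n ≥ 0, and let ω ∈ S_n be k-maximal. Then the order ideal {x ∈ S_n : Inv(x) ⊆ Inv(ω)} of the right weak order is a union of ≡_k classes: for all x, y ∈ S_n, if Inv(x) ⊆ Inv(ω) and y ≡_k x, then Inv(y) ⊆ Inv(ω). -/
/-!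
An inversion `a < b` of `y` with `b - a < k` is an inversion of `x`, hence of `ω`. For a longer
non-inversion `a < b` of `ω`, `k`-maximality of `ω` puts some value `c` with `a < c < b` between
`a` and `b` in `ω`; wherever `c` sits in `y`, one of the shorter pairs `(a, c)`, `(c, b)` is an
inversion of `y`, so strong induction on `b - a` shows that `(a, b)` is not an inversion of `y`.
-/

theorem Nat.exists_le_lt_and_not_succ {P : ℕ → Prop} {p q : ℕ} (hpq : p ≤ q) (hp : P p)
    (hq : ¬ P q) : ∃ i, p ≤ i ∧ i < q ∧ P i ∧ ¬ P (i + 1) := by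
  induction q, hpq using Nat.le_induction with
  | base => exact absurd hp hq
  | succ q hpq ih =>
    by_cases hPq : P q
    · exact ⟨q, hpq, q.lt_succ_self, hPq, hq⟩
    · obtain ⟨i, hpi, hiq, hPi, hPi'⟩ := ih hPq
      exact ⟨i, hpi, hiq.trans q.lt_succ_self, hPi, hPi'⟩

section

variable {k n : ℕ} {ω : Equiv.Perm (Fin n)}

/-- Walking through `ω` from the position of `a` to that of `b`, some adjacent step goes from a
value `≤ a` to a value `> a`; without an intermediate `c` it would land on a value `≥ b`, a rise
of at least `k`. -/
theorem kMaximal.exists_between (hω : kMaximal k ω) {a b : Fin n} (hgap : (a : ℕ) + k ≤ b)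
    (hpos : ω.symm a < ω.symm b) :
    ∃ c, a < c ∧ c < b ∧ ω.symm a < ω.symm c ∧ ω.symm c < ω.symm b := by
  have hab : a < b :=
    lt_of_le_of_ne (by simp only [Fin.le_def]; omega) (by rintro rfl; exact hpos.false)
  by_contra hc
  push Not at hc
  obtain ⟨i, hpi, hiq, ⟨hin, hωi⟩, hnext⟩ :=
    Nat.exists_le_lt_and_not_succ (P := fun i => ∃ h : i < n, ω ⟨i, h⟩ ≤ a) hpos.le
      ⟨(ω.symm a).isLt, by simp⟩
      (fun ⟨_, h⟩ => by simp only [Fin.eta, ω.apply_symm_apply] at h; exact hab.not_ge h)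
  have hin' : i + 1 < n := by omega
  have hbig : b ≤ ω ⟨i + 1, hin'⟩ := by
    by_contra hlt
    push Not at hlt
    have hac : a < ω ⟨i + 1, hin'⟩ := lt_of_not_ge fun h => hnext ⟨hin', h⟩
    have hbi := hc _ hac hlt (by simp [Fin.lt_def]; omega)
    have hb : ω.symm b = ⟨i + 1, hin'⟩ := Fin.ext (by simp [Fin.le_def] at hbi ⊢; omega)
    simp [← hb] at hlt
  exact hω ⟨i, hin', by simp only [Fin.le_def] at hωi hbig; omega⟩

theorem kMaximal.invSet_subset_of_forall_short (hω : kMaximal k ω) {y : Equiv.Perm (Fin n)}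
    (hshort : ∀ a b : Fin n, (b : ℕ) - a < k → (a, b) ∈ invSet y → (a, b) ∈ invSet ω) :
    invSet y ⊆ invSet ω := by
  rintro ⟨a, b⟩ hy
  induction hd : (b : ℕ) - a using Nat.strong_induction_on generalizing a b with
  | _ d ih =>
  obtain ⟨hab, hyba⟩ := hy
  dsimp only at hab hyba
  by_cases hlt : (b : ℕ) - a < k
  · exact hshort a b hlt ⟨hab, hyba⟩
  refine ⟨hab, lt_of_not_ge fun hle => ?_⟩
  have hpos : ω.symm a < ω.symm b := hle.lt_of_ne (ω.symm.injective.ne hab.ne)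
  have hab' := Fin.lt_def.mp hab
  obtain ⟨c, hac, hcb, hωac, hωcb⟩ := hω.exists_between (by omega) hpos
  rw [Fin.lt_def] at hac hcb
  rcases lt_or_gt_of_ne (y.symm.injective.ne (Fin.ne_of_gt hac)) with hyca | hyac
  · exact (ih _ (by omega) a c ⟨hac, hyca⟩ rfl).2.not_gt hωac
  · exact (ih _ (by omega) c b ⟨hcb, hyba.trans hyac⟩ rfl).2.not_gt hωcb

end

theorem recoilEquiv.mem_invSet {k n : ℕ} {y x : Equiv.Perm (Fin n)} (hyx : recoilEquiv k n y x)
    {a b : Fin n} (hba : (b : ℕ) - a < k) (hy : (a, b) ∈ invSet y) : (a, b) ∈ invSet x := by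
  obtain ⟨hab, hyba⟩ := hy
  refine ⟨hab, lt_of_not_ge fun hle => hyba.not_gt ?_⟩
  exact (hyx a b hab hba).mpr (hle.lt_of_ne (x.symm.injective.ne hab.ne))

theorem ideal_of_kMaximal_union_of_classes_general (k n : ℕ)
    (ω : Equiv.Perm (Fin n)) (hω : kMaximal k ω)
    (x y : Equiv.Perm (Fin n)) (hx : invSet x ⊆ invSet ω)
    (hyx : recoilEquiv k n y x) :
    invSet y ⊆ invSet ω :=
  hω.invSet_subset_of_forall_short fun _ _ hba hy => hx (hyx.mem_invSet hba hy)

/-- for a `k`-maximal `ω`, the order ideal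
`{x : Inv(x) ⊆ Inv(ω)}` of the right weak order is a union of `≡_k` classes. -/
theorem ideal_of_kMaximal_union_of_classes (k n : ℕ) (hk : 2 ≤ k)
    (ω : Equiv.Perm (Fin n)) (hω : kMaximal k ω)
    (x y : Equiv.Perm (Fin n)) (hx : invSet x ⊆ invSet ω)
    (hyx : recoilEquiv k n y x) :
    invSet y ⊆ invSet ω :=
  ideal_of_kMaximal_union_of_classes_general k n ω hω x y hx hyx
end

section
/- For every integer k ≥ 2 and every n ≥ 0, the number of k-minimal permutations in S_n equals n! if n ≤ k, and equals k!·k^(n−k) if n ≥ k. -/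
/-! Removing the largest value `n + 1` from a `k`-minimal word of length `n + 1` leaves a
`k`-minimal word: its two neighbours `a, b` satisfy `a < n + 1 < b + k`. Conversely `n + 1` can
be inserted into a `k`-minimal word of length `n` exactly at the end or right before one of the
`k - 1` values exceeding `n + 1 - k`. Hence for `n ≥ k` each new value multiplies the count by
`k`, while for `n ≤ k` no descent can reach `k`. -/

lemma Nat.card_subtype_prod_of_card_fiber {α β : Type*} [Finite α] [Finite β]
    (P : α → Prop) (Q : α → β → Prop) {c : ℕ} (hQ : ∀ a, P a → Nat.card {b // Q a b} = c) :
    Nat.card {x : α × β // P x.1 ∧ Q x.1 x.2} = Nat.card {a // P a} * c := by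
  have := Fintype.ofFinite {a // P a}
  calc Nat.card {x : α × β // P x.1 ∧ Q x.1 x.2}
      = Nat.card (Σ a : {a // P a}, {b // Q a b}) := Nat.card_congr
        { toFun x := ⟨⟨x.1.1, x.2.1⟩, ⟨x.1.2, x.2.2⟩⟩
          invFun y := ⟨(y.1, y.2), y.1.2, y.2.2⟩ }
    _ = ∑ a : {a // P a}, Nat.card {b // Q a b} := Nat.card_sigma
    _ = Nat.card {a // P a} * c := by
      rw [Finset.sum_const_nat fun a _ => hQ a.1 a.2, Finset.card_univ,
        Nat.card_eq_fintype_card]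

lemma List.isChain_append_cons_of_forall_lt {k m : ℕ} {l₁ l₂ : List ℕ}
    (h : ∀ a ∈ l₁, a < m) :
    (l₁ ++ m :: l₂).IsChain (· < · + k) ↔
      (l₁ ++ l₂).IsChain (· < · + k) ∧ ∀ b ∈ l₂.head?, m < b + k := by
  have hlast : ∀ a ∈ l₁.getLast?, a < m := fun a ha => h a (List.mem_of_getLast? ha)
  simp only [List.isChain_append, List.isChain_cons]
  constructor
  · rintro ⟨h₁, ⟨hm, h₂⟩, -⟩
    exact ⟨⟨h₁, h₂, fun a ha b hb => (hlast a ha).trans (hm b hb)⟩, hm⟩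
  · rintro ⟨⟨h₁, h₂, -⟩, hm⟩
    refine ⟨h₁, ⟨hm, h₂⟩, fun a ha b hb => ?_⟩
    cases hb
    exact Nat.lt_add_right k (hlast a ha)

open Finset

namespace Equiv.Perm

def word {n : ℕ} (σ : Perm (Fin n)) : List ℕ := List.ofFn fun i => (σ i : ℕ)

@[simp] lemma length_word {n : ℕ} (σ : Perm (Fin n)) : (word σ).length = n := by
  simp [word]

@[simp] lemma getElem_word {n : ℕ} (σ : Perm (Fin n)) (i : ℕ) (h : i < (word σ).length) :
    (word σ)[i] = σ ⟨i, by simpa using h⟩ := by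
  simp [word]

lemma kMinimal_iff_isChain_word {k n : ℕ} (σ : Perm (Fin n)) :
    kMinimal k σ ↔ (word σ).IsChain (· < · + k) := by
  simp [kMinimal, word, List.isChain_ofFn]

def insertTop {n : ℕ} (τ : Perm (Fin n)) (p : Fin (n + 1)) : Perm (Fin (n + 1)) :=
  (finSuccEquiv' p).trans (τ.optionCongr.trans (finSuccEquiv' (Fin.last n)).symm)

@[simp] lemma insertTop_apply_self {n : ℕ} (τ : Perm (Fin n)) (p : Fin (n + 1)) :
    insertTop τ p p = Fin.last n := by
  simp [insertTop]

@[simp] lemma insertTop_apply_succAbove {n : ℕ} (τ : Perm (Fin n)) (p : Fin (n + 1))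
    (j : Fin n) : insertTop τ p (p.succAbove j) = (τ j).castSucc := by
  simp [insertTop, Fin.succAbove_last]

@[simp] lemma insertTop_symm_last {n : ℕ} (τ : Perm (Fin n)) (p : Fin (n + 1)) :
    (insertTop τ p).symm (Fin.last n) = p := by
  rw [symm_apply_eq, insertTop_apply_self]

lemma word_insertTop {n : ℕ} (τ : Perm (Fin n)) (p : Fin (n + 1)) :
    word (insertTop τ p) = (word τ).take p ++ n :: (word τ).drop p := by
  have hp := p.is_le
  refine List.ext_getElem (by simp; omega) fun i hi _ => ?_
  simp only [length_word] at hi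
  rcases lt_trichotomy i p with hlt | rfl | hgt
  · have : (⟨i, hi⟩ : Fin (n + 1)) = p.succAbove ⟨i, by omega⟩ :=
      (Fin.succAbove_of_castSucc_lt p ⟨i, by omega⟩ hlt).symm
    rw [List.getElem_append_left (by simp; omega)]
    simp [this]
  · simp [List.getElem_append_right, hp]
  · obtain ⟨j, rfl⟩ := Nat.exists_eq_add_of_lt hgt
    have : (⟨p + j + 1, hi⟩ : Fin (n + 1)) = p.succAbove ⟨p + j, by omega⟩ := by
      rw [Fin.succAbove_of_le_castSucc _ _ (by simp [Fin.le_def])]; rfl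
    rw [List.getElem_append_right (by simp; omega)]
    simp only [getElem_word, this, insertTop_apply_succAbove, Fin.val_castSucc]
    simp [hp, Nat.add_assoc]

lemma lt_of_mem_word {n a : ℕ} {σ : Perm (Fin n)} (ha : a ∈ word σ) : a < n := by
  obtain ⟨i, rfl⟩ := List.mem_ofFn.mp ha
  exact (σ i).is_lt

def AdmitsTopAt (k : ℕ) {n : ℕ} (τ : Perm (Fin n)) (p : Fin (n + 1)) : Prop :=
  ∀ h : (p : ℕ) < n, n < τ ⟨p, h⟩ + k

lemma kMinimal_insertTop_iff {k n : ℕ} (τ : Perm (Fin n)) (p : Fin (n + 1)) :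
    kMinimal k (insertTop τ p) ↔ kMinimal k τ ∧ AdmitsTopAt k τ p := by
  rw [kMinimal_iff_isChain_word, word_insertTop,
    List.isChain_append_cons_of_forall_lt fun a ha => lt_of_mem_word (List.mem_of_mem_take ha),
    List.take_append_drop, kMinimal_iff_isChain_word]
  refine and_congr_right' ?_
  simp [AdmitsTopAt, word, List.getElem?_ofFn]

lemma insertTop_injective {n : ℕ} :
    Function.Injective fun x : Perm (Fin n) × Fin (n + 1) => insertTop x.1 x.2 := by
  rintro ⟨τ, p⟩ ⟨τ', p'⟩ h
  obtain rfl : p = p' := by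
    simpa using congrArg (fun σ : Perm (Fin (n + 1)) => σ.symm (Fin.last n)) h
  refine Prod.ext (Equiv.ext fun j => ?_) rfl
  simpa using congrArg (fun σ : Perm (Fin (n + 1)) => σ (p.succAbove j)) h

noncomputable def insertTopEquiv (n : ℕ) : Perm (Fin n) × Fin (n + 1) ≃ Perm (Fin (n + 1)) :=
  Equiv.ofBijective _ <| (Fintype.bijective_iff_injective_and_card _).mpr
    ⟨insertTop_injective, by simp [Fintype.card_perm, Nat.factorial_succ, mul_comm]⟩

lemma card_admitsTopAt {k n : ℕ} (hk : 1 ≤ k) (hkn : k ≤ n) (τ : Perm (Fin n)) :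
    Nat.card {p : Fin (n + 1) // AdmitsTopAt k τ p} = k := by
  classical
  have hlast : AdmitsTopAt k τ (Fin.last n) := fun h => absurd h (by simp)
  have hcast (j : Fin n) : AdmitsTopAt k τ j.castSucc ↔ n < τ j + k := by simp [AdmitsTopAt]
  have htop : #{v : Fin n | n < v + k} = k - 1 := by
    have hsplit := card_filter_add_card_filter_not (s := univ) fun v : Fin n => v < n + 1 - k
    have hiff (v : Fin n) : ¬ v < n + 1 - k ↔ n < v + k := by omega
    simp only [Fin.card_filter_val_lt, card_univ, Fintype.card_fin, hiff] at hsplit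
    omega
  rw [Nat.card_eq_fintype_card, Fintype.card_subtype, card_filter, Fin.sum_univ_castSucc]
  simp only [hlast, hcast, if_true]
  rw [Equiv.sum_comp τ (fun v => if n < (v : ℕ) + k then 1 else 0), ← card_filter, htop]
  omega

lemma card_kMinimal_of_le {k n : ℕ} (hnk : n ≤ k) :
    Nat.card {σ : Perm (Fin n) // kMinimal k σ} = n.factorial := by
  have hall (σ : Perm (Fin n)) : kMinimal k σ := fun ⟨i, h, hσ⟩ => by
    have := (σ ⟨i, Nat.lt_of_succ_lt h⟩).is_lt
    omega
  rw [Nat.card_congr (Equiv.subtypeUnivEquiv hall), Nat.card_perm, Nat.card_eq_fintype_card,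
    Fintype.card_fin]

lemma card_kMinimal_succ {k n : ℕ} (hk : 1 ≤ k) (hkn : k ≤ n) :
    Nat.card {σ : Perm (Fin (n + 1)) // kMinimal k σ} =
      k * Nat.card {τ : Perm (Fin n) // kMinimal k τ} := by
  have e : {x : Perm (Fin n) × Fin (n + 1) // kMinimal k x.1 ∧ AdmitsTopAt k x.1 x.2} ≃
      {σ : Perm (Fin (n + 1)) // kMinimal k σ} :=
    (insertTopEquiv n).subtypeEquiv fun x => (kMinimal_insertTop_iff x.1 x.2).symm
  rw [← Nat.card_congr e, Nat.card_subtype_prod_of_card_fiber _ _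
    fun τ _ => card_admitsTopAt hk hkn τ, mul_comm]

end Equiv.Perm

/-- the number of `k`-minimal permutations in `S_n` is `n!` if
`n ≤ k` and `k! · k^(n-k)` if `n ≥ k`. -/
theorem num_kMinimal (k n : ℕ) (hk : 2 ≤ k) :
    (n ≤ k → Nat.card {σ : Equiv.Perm (Fin n) // kMinimal k σ} =
      Nat.factorial n) ∧
    (k ≤ n → Nat.card {σ : Equiv.Perm (Fin n) // kMinimal k σ} =
      Nat.factorial k * k ^ (n - k)) := by
  refine ⟨Equiv.Perm.card_kMinimal_of_le, fun hkn => ?_⟩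
  induction n, hkn using Nat.le_induction with
  | base => rw [Equiv.Perm.card_kMinimal_of_le le_rfl, Nat.sub_self, pow_zero, mul_one]
  | succ n hkn ih =>
    rw [Equiv.Perm.card_kMinimal_succ (by omega) hkn, ih, Nat.sub_add_comm hkn, pow_succ]
    ring
end
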